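/- For any α in an algebraically closed field F with α ∉ {0,1}, the algebra E^α_{5,18} : e₁² = e₄, e₂² = e₄ + e₅, e₃² = e₄ + α e₅, e₄² = e₅ is isomorphic to E^{α⁻¹}_{5,18}, via an isomorphism induced by the automorphism of E_{4,5} sending e₁ ↦ −√α e₁, e₂ ↦ √α e₃, e₃ ↦ √α e₂, e₄ ↦ α e₄ (for a chosen square root √α of α). -/

import Mathlib

/-!
Write `α = s²`. The map `e₁ ↦ -s e₁, e₂ ↦ s e₃, e₃ ↦ s e₂, e₄ ↦ s² e₄` multiplies the
`e₄`-components of `e₁², e₂², e₃²` uniformly by `s²`; as `e₅ = e₄²` it must send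
`e₅ ↦ s⁴ e₅ = s² α e₅`. Exchanging `e₂` and `e₃` swaps the `e₅`-coefficients `1` and `α⁻¹` of
their squares, and the rescaling of `e₅` by `α` relative to `e₄` turns them into `α` and `1`,
as in `E^α`.
-/
/-- Multiplication of `E₅,₁₈^α : e₁² = e₄, e₂² = e₄ + e₅, e₃² = e₄ + α e₅, e₄² = e₅`
on `F⁵` (all other products of natural basis vectors are zero). -/
def mulE518 {F : Type*} [Field F] (α : F) :
    (Fin 5 → F) → (Fin 5 → F) → (Fin 5 → F) :=
  fun x y => ![0, 0, 0, x 0 * y 0 + x 1 * y 1 + x 2 * y 2,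
    x 1 * y 1 + α * (x 2 * y 2) + x 3 * y 3]

namespace E518

variable {F : Type*} [Field F]

def swapScale (s : F) : (Fin 5 → F) →ₗ[F] (Fin 5 → F) where
  toFun x := ![-s * x 0, s * x 2, s * x 1, s ^ 2 * x 3, s ^ 4 * x 4]
  map_add' x y := by
    funext i; fin_cases i <;> simp <;> ring
  map_smul' c x := by
    funext i; fin_cases i <;> simp <;> ring

theorem swapScale_comp_swapScale_inv {s : F} (hs : s ≠ 0) :
    swapScale s ∘ₗ swapScale s⁻¹ = LinearMap.id := by
  ext i j
  fin_cases i <;> fin_cases j <;> simp [swapScale, hs]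

theorem swapScale_inv_comp_swapScale {s : F} (hs : s ≠ 0) :
    swapScale s⁻¹ ∘ₗ swapScale s = LinearMap.id := by
  simpa using swapScale_comp_swapScale_inv (inv_ne_zero hs)

def swapScaleEquiv {s : F} (hs : s ≠ 0) : (Fin 5 → F) ≃ₗ[F] (Fin 5 → F) :=
  LinearEquiv.ofLinearMap (swapScale s) (swapScale s⁻¹)
    (swapScale_comp_swapScale_inv hs) (swapScale_inv_comp_swapScale hs)

theorem swapScale_mulE518 {s : F} (hs : s ≠ 0) (x y : Fin 5 → F) :
    swapScale s (mulE518 (s ^ 2)⁻¹ x y) =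
      mulE518 (s ^ 2) (swapScale s x) (swapScale s y) := by
  funext i
  fin_cases i <;> simp [swapScale, mulE518] <;> field_simp <;> ring

end E518

open E518 in
theorem stmt19_general {F : Type*} [Field F] (α s : F)
    (hα0 : α ≠ 0) (hs : s ^ 2 = α) :
    ∃ σ : (Fin 5 → F) ≃ₗ[F] (Fin 5 → F),
      σ (Pi.single 0 1) = (-s) • (Pi.single 0 1 : Fin 5 → F) ∧
      σ (Pi.single 1 1) = s • (Pi.single 2 1 : Fin 5 → F) ∧
      σ (Pi.single 2 1) = s • (Pi.single 1 1 : Fin 5 → F) ∧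
      σ (Pi.single 3 1) = α • (Pi.single 3 1 : Fin 5 → F) ∧
      ∀ x y, σ (mulE518 α⁻¹ x y) = mulE518 α (σ x) (σ y) := by
  subst hs
  have hs0 : s ≠ 0 := by rintro rfl; simp at hα0
  refine ⟨swapScaleEquiv hs0, ?_, ?_, ?_, ?_, swapScale_mulE518 hs0⟩ <;>
    · funext i; fin_cases i <;> simp [swapScaleEquiv, swapScale]

/-- For any `α ∉ {0,1}` in an algebraically closed field `F` and any
square root `s` of `α`, the algebra `E₅,₁₈^α` is isomorphic to `E₅,₁₈^{α⁻¹}`, via an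
isomorphism induced by the automorphism of `E₄,₅` sending
`e₁ ↦ −s e₁, e₂ ↦ s e₃, e₃ ↦ s e₂, e₄ ↦ α e₄`. -/
theorem stmt19 {F : Type*} [Field F] [IsAlgClosed F] (α s : F)
    (hα0 : α ≠ 0) (hα1 : α ≠ 1) (hs : s ^ 2 = α) :
    ∃ σ : (Fin 5 → F) ≃ₗ[F] (Fin 5 → F),
      σ (Pi.single 0 1) = (-s) • (Pi.single 0 1 : Fin 5 → F) ∧
      σ (Pi.single 1 1) = s • (Pi.single 2 1 : Fin 5 → F) ∧
      σ (Pi.single 2 1) = s • (Pi.single 1 1 : Fin 5 → F) ∧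
      σ (Pi.single 3 1) = α • (Pi.single 3 1 : Fin 5 → F) ∧
      ∀ x y, σ (mulE518 α⁻¹ x y) = mulE518 α (σ x) (σ y) :=
  stmt19_general α s hα0 hs
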